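/- Let b ∈ [0, 4] and let ρ_b be the 4 × 4 density matrix (1/6)·[[1,0,0,1],[0,4−b,0,0],[0,0,b,0],[1,0,0,1]], and let σ_z = diag(1, −1). Then √F(ρ_b, (σ_z ⊗ₖ I_2) ρ_b (σ_z ⊗ₖ I_2)) = 2/3; in particular, the Bures discord of response of ρ_b is at most 1/3. -/

import Mathlib

open Matrix Kronecker
open scoped ComplexOrder

open scoped Classical in
/-- The positive semidefinite square root of a matrix (junk value `0` if not PSD). -/
noncomputable def msqrt {n : Type*} [Fintype n] [DecidableEq n] (A : Matrix n n ℂ) : Matrix n n ℂ :=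
  if h : A.PosSemidef then h.1.eigenvectorUnitary.1 * diagonal ((↑) ∘ Real.sqrt ∘ h.1.eigenvalues) *
    (star h.1.eigenvectorUnitary : Matrix n n ℂ) else 0

/-- Square-root fidelity `tr √(√ρ · σ · √ρ)` (as a real number). -/
noncomputable def sqrtFid {n : Type*} [Fintype n] [DecidableEq n] (ρ σ : Matrix n n ℂ) : ℝ :=
  ((msqrt (msqrt ρ * σ * msqrt ρ)).trace).re

/-- Trace norm `tr √(Xᴴ X)` (as a real number). -/
noncomputable def traceNorm {n : Type*} [Fintype n] [DecidableEq n] (X : Matrix n n ℂ) : ℝ :=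
  ((msqrt (Xᴴ * X)).trace).re

/-- The Bell-diagonal two-qubit state with Bell-basis eigenvalues `γ₁, γ₂, γ₃, γ₄`. -/
noncomputable def bellDiag (γ₁ γ₂ γ₃ γ₄ : ℝ) :
    Matrix (Fin 2 × Fin 2) (Fin 2 × Fin 2) ℂ :=
  Matrix.reindex finProdFinEquiv.symm finProdFinEquiv.symm
    ((1 / 2 : ℂ) • !![(γ₁ : ℂ) + γ₂, 0, 0, (γ₁ : ℂ) - γ₂;
        0, (γ₃ : ℂ) + γ₄, (γ₃ : ℂ) - γ₄, 0;
        0, (γ₃ : ℂ) - γ₄, (γ₃ : ℂ) + γ₄, 0;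
        (γ₁ : ℂ) - γ₂, 0, 0, (γ₁ : ℂ) + γ₂])
/-- The two-qubit state `(1/6)·[[1,0,0,1],[0,4−b,0,0],[0,0,b,0],[1,0,0,1]]`. -/
noncomputable def rhoB (b : ℝ) : Matrix (Fin 2 × Fin 2) (Fin 2 × Fin 2) ℂ :=
  Matrix.reindex finProdFinEquiv.symm finProdFinEquiv.symm
    ((1 / 6 : ℂ) • !![1, 0, 0, 1;
        0, (4 : ℂ) - (b : ℝ), 0, 0;
        0, 0, ((b : ℝ) : ℂ), 0;
        1, 0, 0, 1])

/-!
In the basis `|00⟩, |01⟩, |10⟩, |11⟩` the state is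
`ρ_b = (1/3)|Φ⁺⟩⟨Φ⁺| + ((4 - b)/6)|01⟩⟨01| + (b/6)|10⟩⟨10|`, and `σ_z ⊗ I` carries `|Φ⁺⟩` to the
orthogonal Bell vector `|Φ⁻⟩` while fixing the other two projectors. So the Bell block drops out of
`√ρ σ √ρ`, which is `diag(0, ((4 - b)/6)², (b/6)², 0)`, and the fidelity is `(4 - b)/6 + b/6 = 2/3`.
As `σ_z` is unitary and traceless, `1 - 2/3` lies in the set whose infimum is the discord of response.
-/

open scoped MatrixOrder

namespace Real

/-- `sInf` is `0` on sets of reals unbounded below, so no lower bound on `s` is needed. -/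
lemma sInf_le_of_mem_of_nonneg {s : Set ℝ} {x : ℝ} (hx : x ∈ s) (h0 : 0 ≤ x) : sInf s ≤ x := by
  by_cases hs : BddBelow s
  · exact csInf_le hs hx
  · rwa [sInf_of_not_bddBelow hs]

end Real

namespace Matrix

variable {m n : Type*} [Fintype m] [Fintype n]

lemma reindex_mul_reindex (e : m ≃ n) (A B : Matrix m m ℂ) :
    reindex e e A * reindex e e B = reindex e e (A * B) :=
  reindexLinearEquiv_mul ℂ ℂ e e e A B

lemma trace_reindex (e : m ≃ n) (A : Matrix m m ℂ) : (reindex e e A).trace = A.trace :=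
  e.symm.sum_comp fun i => A i i

end Matrix

section msqrt

variable {m n : Type*} [Fintype m] [DecidableEq m] [Fintype n] [DecidableEq n]

lemma msqrt_eq_sqrt {A : Matrix n n ℂ} (hA : A.PosSemidef) : msqrt A = CFC.sqrt A := by
  rw [CFC.sqrt_eq_real_sqrt A hA.nonneg, cfcₙ_eq_cfc, msqrt, dif_pos hA, hA.1.cfc_eq,
    IsHermitian.cfc, Unitary.conjStarAlgAut_apply]
  rfl

lemma msqrt_mul_self {B : Matrix n n ℂ} (hB : B.PosSemidef) : msqrt (B * B) = B := by
  rw [msqrt_eq_sqrt, CFC.sqrt_mul_self B hB.nonneg]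
  simpa [hB.1.eq] using posSemidef_conjTranspose_mul_self B

lemma msqrt_diagonal {d : n → ℂ} (hd : 0 ≤ d) : msqrt (diagonal (d * d)) = diagonal d := by
  have h := msqrt_mul_self (posSemidef_diagonal_iff.2 hd)
  rwa [diagonal_mul_diagonal] at h

lemma msqrt_reindex (e : m ≃ n) (A : Matrix m m ℂ) :
    msqrt (reindex e e A) = reindex e e (msqrt A) := by
  by_cases hA : A.PosSemidef
  · have hB : (msqrt A).PosSemidef := by
      rw [msqrt_eq_sqrt hA]
      exact (CFC.sqrt_nonneg A).posSemidef
    have hBB : msqrt A * msqrt A = A := by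
      rw [msqrt_eq_sqrt hA]
      exact CFC.sqrt_mul_sqrt_self A hA.nonneg
    conv_lhs => rw [← hBB, ← reindex_mul_reindex]
    exact msqrt_mul_self ((posSemidef_submatrix_equiv e.symm).2 hB)
  · simp [msqrt, hA]

lemma sqrtFid_reindex (e : m ≃ n) (ρ σ : Matrix m m ℂ) :
    sqrtFid (reindex e e ρ) (reindex e e σ) = sqrtFid ρ σ := by
  simp only [sqrtFid, msqrt_reindex, reindex_mul_reindex, trace_reindex]

end msqrt

/-- `p (|00⟩ + |11⟩)(⟨00| + ⟨11|) + q |01⟩⟨01| + r |10⟩⟨10|`, basis ordered as by `finProdFinEquiv`. -/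
def xMatrix (p q r : ℝ) : Matrix (Fin 4) (Fin 4) ℂ :=
  !![(p : ℂ), 0, 0, p; 0, q, 0, 0; 0, 0, r, 0; p, 0, 0, p]

def sigmaZKronOne : Matrix (Fin 4) (Fin 4) ℂ := diagonal ![1, 1, -1, -1]

lemma conjTranspose_xMatrix (p q r : ℝ) : (xMatrix p q r)ᴴ = xMatrix p q r := by
  ext i j
  fin_cases i <;> fin_cases j <;> simp [xMatrix]

lemma xMatrix_mul_xMatrix (p q r p' q' r' : ℝ) :
    xMatrix p q r * xMatrix p' q' r' = xMatrix (2 * p * p') (q * q') (r * r') := by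
  ext i j
  fin_cases i <;> fin_cases j <;> simp [xMatrix, mul_apply, Fin.sum_univ_four] <;> ring

lemma xMatrix_sqrt_mul_self {p q r : ℝ} (hp : 0 ≤ p) (hq : 0 ≤ q) (hr : 0 ≤ r) :
    xMatrix √(p / 2) √q √r * xMatrix √(p / 2) √q √r = xMatrix p q r := by
  rw [xMatrix_mul_xMatrix, mul_assoc, Real.mul_self_sqrt (by positivity), Real.mul_self_sqrt hq,
    Real.mul_self_sqrt hr, mul_div_cancel₀ _ two_ne_zero]

lemma posSemidef_xMatrix {p q r : ℝ} (hp : 0 ≤ p) (hq : 0 ≤ q) (hr : 0 ≤ r) :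
    (xMatrix p q r).PosSemidef := by
  simpa only [conjTranspose_xMatrix, xMatrix_sqrt_mul_self hp hq hr] using
    posSemidef_conjTranspose_mul_self (xMatrix √(p / 2) √q √r)

lemma msqrt_xMatrix {p q r : ℝ} (hp : 0 ≤ p) (hq : 0 ≤ q) (hr : 0 ≤ r) :
    msqrt (xMatrix p q r) = xMatrix √(p / 2) √q √r := by
  rw [← xMatrix_sqrt_mul_self hp hq hr,
    msqrt_mul_self (posSemidef_xMatrix (by positivity) (Real.sqrt_nonneg q) (Real.sqrt_nonneg r))]

lemma xMatrix_mul_conj_sigmaZKronOne_mul_xMatrix (a s t p q r : ℝ) :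
    xMatrix a s t * (sigmaZKronOne * xMatrix p q r * sigmaZKronOne) * xMatrix a s t =
      diagonal ![0, ((s * s * q : ℝ) : ℂ), ((t * t * r : ℝ) : ℂ), 0] := by
  ext i j
  simp only [mul_apply, Fin.sum_univ_four]
  fin_cases i <;> fin_cases j <;> simp [xMatrix, sigmaZKronOne] <;> ring

lemma sqrtFid_xMatrix_conj_sigmaZKronOne {p q r : ℝ} (hp : 0 ≤ p) (hq : 0 ≤ q) (hr : 0 ≤ r) :
    sqrtFid (xMatrix p q r) (sigmaZKronOne * xMatrix p q r * sigmaZKronOne) = q + r := by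
  rw [sqrtFid, msqrt_xMatrix hp hq hr, xMatrix_mul_conj_sigmaZKronOne_mul_xMatrix,
    Real.mul_self_sqrt hq, Real.mul_self_sqrt hr]
  have hd : (0 : Fin 4 → ℂ) ≤ ![0, (q : ℂ), (r : ℂ), 0] := by
    intro i
    fin_cases i <;> simp [hq, hr]
  have hsq : ![0, ((q * q : ℝ) : ℂ), ((r * r : ℝ) : ℂ), 0] =
      ![0, (q : ℂ), (r : ℂ), 0] * ![0, (q : ℂ), (r : ℂ), 0] := by
    ext i
    fin_cases i <;> simp
  rw [hsq, msqrt_diagonal hd, trace_diagonal, Fin.sum_univ_four]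
  simp

lemma rhoB_eq_reindex_xMatrix (b : ℝ) :
    rhoB b = reindex finProdFinEquiv.symm finProdFinEquiv.symm
      (xMatrix (1 / 6) ((4 - b) / 6) (b / 6)) := by
  rw [rhoB]
  congr 1
  ext i j
  fin_cases i <;> fin_cases j <;> simp [xMatrix] <;> ring

lemma sigmaZ_kronecker_one_eq_reindex :
    !![1, 0; 0, -1] ⊗ₖ (1 : Matrix (Fin 2) (Fin 2) ℂ) =
      reindex finProdFinEquiv.symm finProdFinEquiv.symm sigmaZKronOne := by
  ext ⟨i, k⟩ ⟨j, l⟩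
  fin_cases i <;> fin_cases k <;> fin_cases j <;> fin_cases l <;>
    simp [sigmaZKronOne, one_apply, finProdFinEquiv]

theorem sqrtFidelity_rhoB_sigmaZ
    (b : ℝ) (hb0 : 0 ≤ b) (hb4 : b ≤ 4) :
    sqrtFid (rhoB b)
        ((!![1, 0; 0, -1] ⊗ₖ (1 : Matrix (Fin 2) (Fin 2) ℂ)) * rhoB b *
          (!![1, 0; 0, -1] ⊗ₖ (1 : Matrix (Fin 2) (Fin 2) ℂ)))
      = 2 / 3 ∧
    sInf {r : ℝ | ∃ U : Matrix (Fin 2) (Fin 2) ℂ, Uᴴ * U = 1 ∧ U.trace = 0 ∧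
        r = 1 - sqrtFid (rhoB b)
          ((U ⊗ₖ (1 : Matrix (Fin 2) (Fin 2) ℂ)) * rhoB b *
            (U ⊗ₖ (1 : Matrix (Fin 2) (Fin 2) ℂ))ᴴ)} ≤ 1 / 3 := by
  have hfid : sqrtFid (rhoB b)
      ((!![1, 0; 0, -1] ⊗ₖ (1 : Matrix (Fin 2) (Fin 2) ℂ)) * rhoB b *
        (!![1, 0; 0, -1] ⊗ₖ (1 : Matrix (Fin 2) (Fin 2) ℂ))) = 2 / 3 := by
    rw [rhoB_eq_reindex_xMatrix, sigmaZ_kronecker_one_eq_reindex, reindex_mul_reindex,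
      reindex_mul_reindex, sqrtFid_reindex,
      sqrtFid_xMatrix_conj_sigmaZKronOne (by norm_num) (by linarith) (by linarith)]
    ring
  have hσ : (!![1, 0; 0, -1] : Matrix (Fin 2) (Fin 2) ℂ)ᴴ = !![1, 0; 0, -1] := by
    ext i j
    fin_cases i <;> fin_cases j <;> simp
  refine ⟨hfid, Real.sInf_le_of_mem_of_nonneg ⟨!![1, 0; 0, -1], ?unitary, ?traceless, ?value⟩
    (by norm_num)⟩
  case unitary => simp [hσ, one_fin_two]
  case traceless => simp
  case value => rw [conjTranspose_kronecker, hσ, conjTranspose_one, hfid]; norm_num
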